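/- arXiv:2306.01468 — 2 statements merged into one kernel-verified Lean document; each statement's English description precedes it below -/
import Mathlib

section
/- Let k_X(x, x') = ψ(x − x') be a translation-invariant kernel on ℝ^d, F_ν and G_ν two probability measures on ℝ^d (error distributions), and w_1,…,w_n ∈ ℝ^d. Let P = (1/n)∑_i (F_ν shifted by w_i) and Q = (1/n)∑_i (G_ν shifted by w_i), where 'F shifted by w' denotes the pushforward of F under ν ↦ w + ν. Then MMD_{k_X}(P, Q) ≤ MMD_{k_X}(F_ν, G_ν). -/
open MeasureTheory
open scoped RealInnerProductSpace

/-!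
The squared distance between two mean embeddings expands, since the inner product commutes with
Bochner integrals, into double integrals of the kernel `⟪φ x, φ y⟫` alone. Shifting the feature
map by `v` does not change a translation-invariant kernel, so every shifted pair of embeddings is
exactly as far apart as the unshifted one, and the triangle inequality bounds the average of the
`n` shifted differences by that common distance.
-/

section MeanEmbedding

variable {X H : Type*} [MeasurableSpace X]
  [NormedAddCommGroup H] [InnerProductSpace ℝ H] [CompleteSpace H]
  {μ ν : Measure X}

theorem inner_integral_integral {f g : X → H} (hf : Integrable f μ) (hg : Integrable g ν) :
    ⟪∫ x, f x ∂μ, ∫ y, g y ∂ν⟫ = ∫ y, ∫ x, ⟪f x, g y⟫ ∂μ ∂ν := by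
  rw [← integral_inner hg]
  refine integral_congr_ae (Filter.Eventually.of_forall fun y => ?_)
  dsimp only
  rw [real_inner_comm, ← integral_inner hf]
  exact integral_congr_ae (Filter.Eventually.of_forall fun x => real_inner_comm _ _)

theorem inner_integral_integral_congr {f g : X → H} (hfg : ∀ x y, ⟪f x, f y⟫ = ⟪g x, g y⟫)
    (hfμ : Integrable f μ) (hfν : Integrable f ν) (hgμ : Integrable g μ) (hgν : Integrable g ν) :
    ⟪∫ x, f x ∂μ, ∫ x, f x ∂ν⟫ = ⟪∫ x, g x ∂μ, ∫ x, g x ∂ν⟫ := by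
  simp only [inner_integral_integral hfμ hfν, inner_integral_integral hgμ hgν, hfg]

theorem norm_integral_sub_integral_congr {f g : X → H} (hfg : ∀ x y, ⟪f x, f y⟫ = ⟪g x, g y⟫)
    (hfμ : Integrable f μ) (hfν : Integrable f ν) (hgμ : Integrable g μ) (hgν : Integrable g ν) :
    ‖(∫ x, f x ∂μ) - ∫ x, f x ∂ν‖ = ‖(∫ x, g x ∂μ) - ∫ x, g x ∂ν‖ := by
  have hsq : ‖(∫ x, f x ∂μ) - ∫ x, f x ∂ν‖ ^ 2 = ‖(∫ x, g x ∂μ) - ∫ x, g x ∂ν‖ ^ 2 := by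
    rw [← real_inner_self_eq_norm_sq, ← real_inner_self_eq_norm_sq, inner_sub_sub_self,
      inner_sub_sub_self, inner_integral_integral_congr hfg hfμ hfμ hgμ hgμ,
      inner_integral_integral_congr hfg hfμ hfν hgμ hgν,
      inner_integral_integral_congr hfg hfν hfμ hgν hgμ,
      inner_integral_integral_congr hfg hfν hfν hgν hgν]
  exact (sq_eq_sq₀ (norm_nonneg _) (norm_nonneg _)).1 hsq

end MeanEmbedding

theorem inner_comp_add_left_eq {X H : Type*} [AddCommGroup X] [Inner ℝ H] {φ : X → H}
    {ψ : X → ℝ} (hk : ∀ x x', ⟪φ x, φ x'⟫ = ψ (x - x')) (v x x' : X) :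
    ⟪φ (v + x), φ (v + x')⟫ = ⟪φ x, φ x'⟫ := by
  rw [hk, hk, add_sub_add_left_eq_sub]

theorem norm_inv_natCast_smul_sum_le {E : Type*} [SeminormedAddCommGroup E] [NormedSpace ℝ E]
    {n : ℕ} {a : Fin n → E} {c : ℝ} (hc : 0 ≤ c) (ha : ∀ i, ‖a i‖ ≤ c) :
    ‖(n : ℝ)⁻¹ • ∑ i, a i‖ ≤ c := by
  rcases n.eq_zero_or_pos with rfl | hn
  · simpa using hc
  calc ‖(n : ℝ)⁻¹ • ∑ i, a i‖ ≤ (n : ℝ)⁻¹ * ∑ _i : Fin n, c := by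
        rw [norm_smul, Real.norm_of_nonneg (by positivity)]
        gcongr
        exact (norm_sum_le _ _).trans (Finset.sum_le_sum fun i _ => ha i)
    _ = c := by simp [hn.ne']

theorem shifted_mixture_mmd_le_general {H : Type*}
    [NormedAddCommGroup H] [InnerProductSpace ℝ H] [CompleteSpace H]
    (d n : ℕ)
    (φ : EuclideanSpace ℝ (Fin d) → H)
    (ψ : EuclideanSpace ℝ (Fin d) → ℝ)
    (hk : ∀ x x', ⟪φ x, φ x'⟫ = ψ (x - x'))
    (F G : Measure (EuclideanSpace ℝ (Fin d)))
    (w : Fin n → EuclideanSpace ℝ (Fin d))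
    (hintF : ∀ v : EuclideanSpace ℝ (Fin d), Integrable (fun u => φ (v + u)) F)
    (hintG : ∀ v : EuclideanSpace ℝ (Fin d), Integrable (fun u => φ (v + u)) G) :
    ‖(n : ℝ)⁻¹ • ∑ i, (∫ u, φ (w i + u) ∂F) -
        (n : ℝ)⁻¹ • ∑ i, (∫ u, φ (w i + u) ∂G)‖
      ≤ ‖(∫ u, φ u ∂F) - ∫ u, φ u ∂G‖ := by
  have h0F : Integrable φ F := by simpa using hintF 0
  have h0G : Integrable φ G := by simpa using hintG 0
  have hshift : ∀ v, ‖(∫ u, φ (v + u) ∂F) - ∫ u, φ (v + u) ∂G‖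
      = ‖(∫ u, φ u ∂F) - ∫ u, φ u ∂G‖ := fun v =>
    norm_integral_sub_integral_congr (inner_comp_add_left_eq hk v) (hintF v) (hintG v) h0F h0G
  rw [← smul_sub, ← Finset.sum_sub_distrib]
  exact norm_inv_natCast_smul_sum_le (norm_nonneg _) fun i => (hshift (w i)).le

/-- for a translation-invariant kernel k_X(x,x') = ψ(x−x') = ⟪φ x, φ x'⟫
on ℝ^d, error distributions F, G and points w₁,…,w_n, the MMD (RKHS-norm distance of
kernel mean embeddings) between the shifted mixtures P = (1/n)∑_i (F shifted by w_i)
and Q = (1/n)∑_i (G shifted by w_i) is at most MMD_{k_X}(F, G). -/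
theorem shifted_mixture_mmd_le {H : Type*}
    [NormedAddCommGroup H] [InnerProductSpace ℝ H] [CompleteSpace H]
    (d n : ℕ) (hn : 0 < n)
    (φ : EuclideanSpace ℝ (Fin d) → H)
    (ψ : EuclideanSpace ℝ (Fin d) → ℝ)
    (hk : ∀ x x', ⟪φ x, φ x'⟫ = ψ (x - x'))
    (F G : Measure (EuclideanSpace ℝ (Fin d)))
    [IsProbabilityMeasure F] [IsProbabilityMeasure G]
    (w : Fin n → EuclideanSpace ℝ (Fin d))
    (hintF : ∀ v : EuclideanSpace ℝ (Fin d), Integrable (fun u => φ (v + u)) F)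
    (hintG : ∀ v : EuclideanSpace ℝ (Fin d), Integrable (fun u => φ (v + u)) G) :
    ‖(n : ℝ)⁻¹ • ∑ i, (∫ u, φ (w i + u) ∂F) -
        (n : ℝ)⁻¹ • ∑ i, (∫ u, φ (w i + u) ∂G)‖
      ≤ ‖(∫ u, φ u ∂F) - ∫ u, φ u ∂G‖ :=
  shifted_mixture_mmd_le_general d n φ ψ hk F G w hintF hintG
end

section
/- For the squared RBF kernel k(x,x') = exp(−‖x−x'‖²/l²) on ℝ^d, the squared MMD between F₁ = N(0, σ₁² I) and F₂ = N(0, σ₂² I) equals (l²/(l²+4σ₁²))^{d/2} − 2(l²/(l²+2σ₁²+2σ₂²))^{d/2} + (l²/(l²+4σ₂²))^{d/2}. -/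
/-!
The kernel factorizes over coordinates and the Gaussians are product measures, so each of the
three double integrals is the `d`-th power of a one-dimensional one. Write `c = 1 / l²`.
Completing the square, integrating `exp (-c (a - b)²)` in `b` against `N(0, v)` leaves
`(1 + 2cv)^(-1/2) exp (-c' a²)` with `c' = c / (1 + 2cv)`, and integrating this in `a` against
`N(0, w)` gives `(1 + 2c(v + w))^(-1/2)`, since `(1 + 2cv)(1 + 2c'w) = 1 + 2c(v + w)`.
-/

open MeasureTheory ProbabilityTheory

/-- Squared MMD via the double-integral formula
MMD_k(P,Q)² = E_{P×P}[k] − 2E_{P×Q}[k] + E_{Q×Q}[k]. -/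
noncomputable def mmdSq {A : Type*} [MeasurableSpace A] (k : A → A → ℝ)
    (P Q : Measure A) : ℝ :=
  (∫ a, ∫ b, k a b ∂P ∂P) - 2 * (∫ a, ∫ b, k a b ∂Q ∂P) + ∫ a, ∫ b, k a b ∂Q ∂Q

open Real
open scoped NNReal

theorem integral_exp_neg_mul_sq_add_mul_add {a : ℝ} (ha : 0 < a) (b e : ℝ) :
    ∫ x : ℝ, exp (-a * x ^ 2 + b * x + e) = √(π / a) * exp (e + b ^ 2 / (4 * a)) := by
  have complete_square (x : ℝ) : -a * x ^ 2 + b * x + e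
      = -a * (x - b / (2 * a)) ^ 2 + (e + b ^ 2 / (4 * a)) := by
    field_simp
    ring
  simp_rw [complete_square, exp_add, integral_mul_const]
  rw [integral_sub_right_eq_self (fun x ↦ exp (-a * x ^ 2)), integral_gaussian]

theorem integral_exp_neg_mul_sub_sq_gaussianReal {c : ℝ} (hc : 0 ≤ c) (v : ℝ≥0) (y : ℝ) :
    ∫ x, exp (-(c * (y - x) ^ 2)) ∂gaussianReal 0 v
      = (√(1 + 2 * c * v))⁻¹ * exp (-(c / (1 + 2 * c * v)) * y ^ 2) := by
  rcases eq_or_ne v 0 with rfl | hv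
  · simp [gaussianReal_zero_var]
  have hv' : (0 : ℝ) < v := by positivity
  have integrand : ∀ x : ℝ, gaussianPDFReal 0 v x • exp (-(c * (y - x) ^ 2))
      = (√(2 * π * v))⁻¹
        * exp (-(c + (2 * (v : ℝ))⁻¹) * x ^ 2 + (2 * c * y) * x + -(c * y ^ 2)) := by
    intro x
    rw [smul_eq_mul, gaussianPDFReal, mul_assoc, ← exp_add]
    congr 2
    field_simp
    ring
  simp_rw [integral_gaussianReal_eq_integral_smul hv, integrand]
  rw [integral_const_mul, integral_exp_neg_mul_sq_add_mul_add (by positivity)]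
  have prefactor : √(π / (c + (2 * (v : ℝ))⁻¹)) = √(2 * π * v) * (√(1 + 2 * c * v))⁻¹ := by
    rw [← sqrt_inv, ← sqrt_mul (by positivity)]
    congr 1
    field_simp
    ring
  have exponent : -(c * y ^ 2) + (2 * c * y) ^ 2 / (4 * (c + (2 * (v : ℝ))⁻¹))
      = -(c / (1 + 2 * c * v)) * y ^ 2 := by
    field_simp
    ring
  rw [prefactor, exponent, ← mul_assoc, inv_mul_cancel_left₀ (by positivity)]

theorem integral_integral_exp_neg_mul_sub_sq_gaussianReal {c : ℝ} (hc : 0 ≤ c) (v w : ℝ≥0) :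
    ∫ a, ∫ b, exp (-(c * (a - b) ^ 2)) ∂gaussianReal 0 v ∂gaussianReal 0 w
      = (√(1 + 2 * c * (v + w)))⁻¹ := by
  have hc' : 0 ≤ c / (1 + 2 * c * v) := by positivity
  have outer : ∫ a, exp (-(c / (1 + 2 * c * v)) * a ^ 2) ∂gaussianReal 0 w
      = (√(1 + 2 * (c / (1 + 2 * c * v)) * w))⁻¹ := by
    simpa using integral_exp_neg_mul_sub_sq_gaussianReal hc' w 0
  simp only [integral_exp_neg_mul_sub_sq_gaussianReal hc v]
  rw [integral_const_mul, outer, ← mul_inv, ← sqrt_mul (by positivity)]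
  congr 2
  field_simp
  ring

theorem integral_integral_prod_pi_eq_pow {ι 𝕜 E : Type*} [Fintype ι] [RCLike 𝕜]
    [MeasurableSpace E] (μ ν : Measure E) [SigmaFinite μ] [SigmaFinite ν] (f : E → E → 𝕜) :
    ∫ a, ∫ b, ∏ i, f (a i) (b i) ∂Measure.pi (fun _ : ι ↦ μ) ∂Measure.pi (fun _ ↦ ν)
      = (∫ a, ∫ b, f a b ∂μ ∂ν) ^ Fintype.card ι := by
  have inner (a : ι → E) : ∫ b, ∏ i, f (a i) (b i) ∂Measure.pi (fun _ ↦ μ)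
      = ∏ i, ∫ b, f (a i) b ∂μ :=
    integral_fintype_prod_eq_prod (fun i ↦ f (a i))
  simp only [inner]
  exact integral_fintype_prod_eq_pow (μ := ν) fun a ↦ ∫ b, f a b ∂μ

theorem integral_integral_exp_neg_mul_sum_sq_gaussianReal_pi {ι : Type*} [Fintype ι] {c : ℝ}
    (hc : 0 ≤ c) (v w : ℝ≥0) :
    ∫ a, ∫ b, exp (-(c * ∑ i, (a i - b i) ^ 2))
        ∂Measure.pi (fun _ : ι ↦ gaussianReal 0 v) ∂Measure.pi (fun _ ↦ gaussianReal 0 w)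
      = ((1 + 2 * c * (v + w))⁻¹) ^ ((Fintype.card ι : ℝ) / 2) := by
  simp_rw [Finset.mul_sum, ← Finset.sum_neg_distrib, exp_sum]
  rw [integral_integral_prod_pi_eq_pow _ _ fun a b ↦ exp (-(c * (a - b) ^ 2)),
    integral_integral_exp_neg_mul_sub_sq_gaussianReal hc, ← sqrt_inv, sqrt_eq_rpow,
    ← rpow_natCast, ← rpow_mul (by positivity)]
  ring_nf

/-- for the squared RBF kernel k(x,x') = exp(−‖x−x'‖²/l²) on ℝ^d,
MMD²(N(0,σ₁²I), N(0,σ₂²I)) =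
(l²/(l²+4σ₁²))^{d/2} − 2(l²/(l²+2σ₁²+2σ₂²))^{d/2} + (l²/(l²+4σ₂²))^{d/2}. -/
theorem squared_rbf_mmd_gaussians (d : ℕ) (l : ℝ) (hl : 0 < l)
    (σ₁ σ₂ : NNReal) :
    mmdSq (fun x x' : Fin d → ℝ => Real.exp (-(∑ i, (x i - x' i) ^ 2) / l ^ 2))
        (Measure.pi fun _ : Fin d => gaussianReal 0 (σ₁ ^ 2))
        (Measure.pi fun _ : Fin d => gaussianReal 0 (σ₂ ^ 2))
      = (l ^ 2 / (l ^ 2 + 4 * (σ₁ : ℝ) ^ 2)) ^ ((d : ℝ) / 2)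
        - 2 * (l ^ 2 / (l ^ 2 + 2 * (σ₁ : ℝ) ^ 2 + 2 * (σ₂ : ℝ) ^ 2)) ^ ((d : ℝ) / 2)
        + (l ^ 2 / (l ^ 2 + 4 * (σ₂ : ℝ) ^ 2)) ^ ((d : ℝ) / 2) := by
  have rbf : ∀ v w : ℝ≥0, ∫ a, ∫ b, exp (-(∑ i, (a i - b i) ^ 2) / l ^ 2)
        ∂Measure.pi (fun _ : Fin d ↦ gaussianReal 0 v) ∂Measure.pi (fun _ ↦ gaussianReal 0 w)
      = (l ^ 2 / (l ^ 2 + 2 * v + 2 * w)) ^ ((d : ℝ) / 2) := by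
    intro v w
    have kernel (a b : Fin d → ℝ) : exp (-(∑ i, (a i - b i) ^ 2) / l ^ 2)
        = exp (-((l ^ 2)⁻¹ * ∑ i, (a i - b i) ^ 2)) := by
      rw [neg_div, div_eq_inv_mul]
    simp only [kernel]
    rw [integral_integral_exp_neg_mul_sum_sq_gaussianReal_pi (by positivity), Fintype.card_fin]
    congr 1
    field_simp
    ring
  rw [mmdSq, rbf, rbf, rbf]
  push_cast
  ring_nf
end
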